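/- Let (x*, λ*, μ*) be a saddle point of the Lagrangian L, assume each g_{ji} is Lipschitz continuous on X_i with modulus L_{ji}, and let 0 < ε < 1 and 0 < ρ ≤ min{(1−ε)/(A_max + M·L_max), (1−ε)/(N·A_max), (1−ε)/(N·L_max)}. Apply one N-block PCPM iteration with step size ρ to a point (x^k, λ^k, μ^k) with x_i^k ∈ X_i and μ^k ∈ ℝ^M_{≥0}, producing γ^{k+1}, ν^{k+1}, x^{k+1}, λ^{k+1}, μ^{k+1}. Then Σ_i ‖x_i^{k+1} − x*_i‖₂² + ‖λ^{k+1} − λ*‖₂² + ‖μ^{k+1} − μ*‖₂² ≤ Σ_i ‖x_i^k − x*_i‖₂² + ‖λ^k − λ*‖₂² + ‖μ^k − μ*‖₂² − ε·( Σ_i ‖x_i^{k+1} − x_i^k‖₂² + ‖γ^{k+1} − λ^{k+1}‖₂² + ‖ν^{k+1} − μ^{k+1}‖₂² + ‖γ^{k+1} − λ^k‖₂² + ‖ν^{k+1} − μ^k‖₂² ). -/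

import Mathlib

/-!
The proximal `x`-update minimises a function that is convex plus `‖x - xᵏ‖² / (2ρ)`. Comparing
it with `x*` and using `L(x*, γ, ν) ≤ L(x*, λ*, μ*) ≤ L(xᵏ⁺¹, λ*, μ*)` gives a three-point
inequality for the primal distances, in which the gap `L(xᵏ⁺¹, γ, ν) - L(xᵏ⁺¹, λ*, μ*)`
appears. Both corrector updates satisfy the matching three-point inequality for the dual
distances (the projection onto `ℝ^M_{≥0}` only helps, since `μ* ≥ 0`), and in the sum the gap
terms cancel. What remains are `‖γ - λᵏ⁺¹‖²` and the analogous term for `ν`, which the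
operator-norm and Lipschitz bounds control by `ρ² N (A_max² + M L_max²) Σᵢ ‖xᵢᵏ⁺¹ - xᵢᵏ‖²`;
the step-size condition makes this at most `(1 - ε) / (1 + ε)` times the primal step.
-/

open scoped BigOperators

/-- The Lagrangian `L(x, λ, μ) = Σᵢ fᵢ(xᵢ) + λᵀ(Σᵢ Aᵢ xᵢ − b) + Σⱼ μⱼ Σᵢ g_{ji}(xᵢ)`. -/
noncomputable def lagrangian {N M m : ℕ} {n : Fin N → ℕ}
    (f : ∀ i, EuclideanSpace ℝ (Fin (n i)) → ℝ)
    (A : ∀ i, EuclideanSpace ℝ (Fin (n i)) →L[ℝ] EuclideanSpace ℝ (Fin m))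
    (b : EuclideanSpace ℝ (Fin m))
    (g : Fin M → ∀ i, EuclideanSpace ℝ (Fin (n i)) → ℝ)
    (x : ∀ i, EuclideanSpace ℝ (Fin (n i)))
    (lam : EuclideanSpace ℝ (Fin m)) (mu : EuclideanSpace ℝ (Fin M)) : ℝ :=
  (∑ i, f i (x i)) + (inner ℝ lam ((∑ i, A i (x i)) - b) : ℝ)
    + ∑ j, mu j * ∑ i, g j i (x i)

/-- `(x*, λ*, μ*)` is a saddle point of the Lagrangian:
`x*ᵢ ∈ Xᵢ`, `μ* ≥ 0`, and `L(x*, λ, μ) ≤ L(x*, λ*, μ*) ≤ L(x, λ*, μ*)` for all feasible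
`x`, all `λ ∈ ℝ^m` and all `μ ∈ ℝ^M_{≥0}`. -/
noncomputable def IsSaddlePoint {N M m : ℕ} {n : Fin N → ℕ}
    (f : ∀ i, EuclideanSpace ℝ (Fin (n i)) → ℝ)
    (A : ∀ i, EuclideanSpace ℝ (Fin (n i)) →L[ℝ] EuclideanSpace ℝ (Fin m))
    (b : EuclideanSpace ℝ (Fin m))
    (g : Fin M → ∀ i, EuclideanSpace ℝ (Fin (n i)) → ℝ)
    (X : ∀ i, Set (EuclideanSpace ℝ (Fin (n i))))
    (xs : ∀ i, EuclideanSpace ℝ (Fin (n i)))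
    (ls : EuclideanSpace ℝ (Fin m)) (ms : EuclideanSpace ℝ (Fin M)) : Prop :=
  (∀ i, xs i ∈ X i) ∧ (∀ j, 0 ≤ ms j) ∧
  (∀ (lam : EuclideanSpace ℝ (Fin m)) (mu : EuclideanSpace ℝ (Fin M)), (∀ j, 0 ≤ mu j) →
    lagrangian f A b g xs lam mu ≤ lagrangian f A b g xs ls ms) ∧
  (∀ x : ∀ i, EuclideanSpace ℝ (Fin (n i)), (∀ i, x i ∈ X i) →
    lagrangian f A b g xs ls ms ≤ lagrangian f A b g x ls ms)

open scoped RealInnerProductSpace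
open Filter Topology

section InnerProductSpace
variable {E F : Type*} [NormedAddCommGroup E] [InnerProductSpace ℝ E]
  [NormedAddCommGroup F] [InnerProductSpace ℝ F]

lemma norm_sq_convex_comb (u v : E) (t : ℝ) :
    ‖(1 - t) • u + t • v‖ ^ 2 = (1 - t) * ‖u‖ ^ 2 + t * ‖v‖ ^ 2 - t * (1 - t) * ‖v - u‖ ^ 2 := by
  simp only [← real_inner_self_eq_norm_sq, inner_add_left, inner_add_right, inner_sub_left,
    inner_sub_right, real_inner_smul_left, real_inner_smul_right, real_inner_comm u v]
  ring

lemma two_mul_inner_sub_sub_eq (γ l p q : E) :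
    2 * ⟪γ - l, q - p⟫ = ‖γ - p‖ ^ 2 - ‖γ - q‖ ^ 2 + ‖q - l‖ ^ 2 - ‖p - l‖ ^ 2 := by
  simp only [← real_inner_self_eq_norm_sq, inner_sub_left, inner_sub_right,
    real_inner_comm p γ, real_inner_comm q γ, real_inner_comm l q, real_inner_comm l p]
  ring

lemma ConvexOn.le_of_isMinOn_add_norm_sub_sq {X : Set E} {φ : E → ℝ} (hφ : ConvexOn ℝ X φ)
    {c : ℝ} {x₀ x₁ : E} (hx₁ : x₁ ∈ X)
    (hmin : IsMinOn (fun z => φ z + c * ‖z - x₀‖ ^ 2) X x₁) {y : E} (hy : y ∈ X) :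
    φ x₁ + c * ‖x₁ - x₀‖ ^ 2 + c * ‖y - x₁‖ ^ 2 ≤ φ y + c * ‖y - x₀‖ ^ 2 := by
  have segment : ∀ t ∈ Set.Ioc (0 : ℝ) 1,
      φ x₁ + c * ‖x₁ - x₀‖ ^ 2 + c * (1 - t) * ‖y - x₁‖ ^ 2 ≤ φ y + c * ‖y - x₀‖ ^ 2 := by
    rintro t ⟨ht₀, ht₁⟩
    have hsum : 1 - t + t = 1 := by ring
    have hconv := hφ.2 hx₁ hy (sub_nonneg.2 ht₁) ht₀.le hsum
    have hnorm : ‖(1 - t) • x₁ + t • y - x₀‖ ^ 2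
        = (1 - t) * ‖x₁ - x₀‖ ^ 2 + t * ‖y - x₀‖ ^ 2 - t * (1 - t) * ‖y - x₁‖ ^ 2 := by
      rw [show (1 - t) • x₁ + t • y - x₀ = (1 - t) • (x₁ - x₀) + t • (y - x₀) by module,
        norm_sq_convex_comb, sub_sub_sub_cancel_right]
    have hle := isMinOn_iff.1 hmin _ (hφ.1 hx₁ hy (sub_nonneg.2 ht₁) ht₀.le hsum)
    simp only [smul_eq_mul, hnorm] at hconv hle
    refine le_of_mul_le_mul_left ?_ ht₀
    linarith
  have hlim : Tendsto (fun t => φ x₁ + c * ‖x₁ - x₀‖ ^ 2 + c * (1 - t) * ‖y - x₁‖ ^ 2)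
      (𝓝[>] 0) (𝓝 (φ x₁ + c * ‖x₁ - x₀‖ ^ 2 + c * ‖y - x₁‖ ^ 2)) :=
    tendsto_nhdsWithin_of_tendsto_nhds (Continuous.tendsto' (by fun_prop) 0 _ (by simp))
  exact le_of_tendsto hlim (eventually_of_mem (Ioc_mem_nhdsGT one_pos) segment)

lemma convexOn_add_inner_add_sum {ι : Type*} [Fintype ι] {s : Set E} {φ : E → ℝ}
    {ψ : ι → E → ℝ} {ν : ι → ℝ} (hφ : ConvexOn ℝ s φ) (hψ : ∀ j, ConvexOn ℝ s (ψ j))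
    (hν : ∀ j, 0 ≤ ν j) (T : E →L[ℝ] F) (γ : F) :
    ConvexOn ℝ s (fun z => φ z + ⟪γ, T z⟫ + ∑ j, ν j * ψ j z) := by
  have hlin : ConvexOn ℝ s (fun z => ⟪γ, T z⟫) :=
    ((innerSL ℝ γ).comp T : E →L[ℝ] ℝ).toLinearMap.convexOn hφ.1
  have hsum : ConvexOn ℝ s (∑ j, fun z => ν j • ψ j z) :=
    Finset.sum_induction _ (ConvexOn ℝ s) (fun _ _ h₁ h₂ => h₁.add h₂)
      (convexOn_const 0 hφ.1) fun j _ => (hψ j).smul (hν j)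
  rw [Finset.sum_fn] at hsum
  exact (hφ.add hlin).add hsum

lemma norm_sub_sq_corrector_le {ε : ℝ} (hε : ε ≤ 1) (l lam γ lam' : E) :
    ‖lam' - l‖ ^ 2 - ‖lam - l‖ ^ 2 + ε * (‖γ - lam'‖ ^ 2 + ‖γ - lam‖ ^ 2)
      ≤ 2 * ⟪γ - l, lam' - lam⟫ + (1 + ε) * ‖γ - lam'‖ ^ 2 := by
  linarith [two_mul_inner_sub_sub_eq γ l lam lam',
    mul_nonneg (sub_nonneg.2 hε) (sq_nonneg ‖γ - lam‖)]

end InnerProductSpace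

lemma max_zero_sub_mul_nonpos {p : ℝ} (hp : 0 ≤ p) (t : ℝ) :
    (p - max 0 t) * (t - max 0 t) ≤ 0 := by
  rcases le_total t 0 with ht | ht
  · rw [max_eq_left ht]; nlinarith
  · rw [max_eq_right ht, sub_self, mul_zero]

lemma sq_max_zero_sub_max_zero_le (t₀ t₁ : ℝ) :
    (max 0 t₀ - max 0 t₁) ^ 2 - 2 * ((max 0 t₀ - max 0 t₁) * (t₁ - max 0 t₁))
      ≤ (t₀ - t₁) ^ 2 := by
  nlinarith [max_zero_sub_mul_nonpos (le_max_left 0 t₁) t₀,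
    sq_nonneg (t₀ - max 0 t₀ - (t₁ - max 0 t₁))]

lemma max_zero_corrector_le {w ε : ℝ} (hw : 0 ≤ w) (hε₀ : 0 ≤ ε) (hε₁ : ε ≤ 1) (u s₀ s₁ : ℝ) :
    (max 0 (u + s₁) - w) ^ 2 - (u - w) ^ 2
        + ε * ((max 0 (u + s₀) - max 0 (u + s₁)) ^ 2 + (max 0 (u + s₀) - u) ^ 2)
      ≤ 2 * ((max 0 (u + s₀) - w) * s₁) + (1 + ε) * (s₀ - s₁) ^ 2 := by
  have hS := max_zero_sub_mul_nonpos (le_max_left 0 (u + s₀)) (u + s₁)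
  have hT := max_zero_sub_mul_nonpos hw (u + s₁)
  have hR := sq_max_zero_sub_max_zero_le (u + s₀) (u + s₁)
  rw [add_sub_add_left_eq_sub] at hR
  linarith [mul_nonneg (sub_nonneg.2 hε₁) (sq_nonneg (max 0 (u + s₀) - u)),
    mul_le_mul_of_nonneg_left hR (by linarith : (0 : ℝ) ≤ 1 + ε),
    mul_nonpos_of_nonneg_of_nonpos hε₀ hS]

lemma norm_sub_sq_projected_corrector_le {ι : Type*} [Fintype ι] {ε : ℝ} (hε₀ : 0 ≤ ε)
    (hε₁ : ε ≤ 1) {w u ν μ' : EuclideanSpace ℝ ι} {s₀ s₁ : ι → ℝ} (hw : ∀ j, 0 ≤ w j)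
    (hν : ∀ j, ν j = max 0 (u j + s₀ j)) (hμ' : ∀ j, μ' j = max 0 (u j + s₁ j)) :
    ‖μ' - w‖ ^ 2 - ‖u - w‖ ^ 2 + ε * (‖ν - μ'‖ ^ 2 + ‖ν - u‖ ^ 2)
      ≤ 2 * ∑ j, (ν j - w j) * s₁ j + (1 + ε) * ∑ j, (s₀ j - s₁ j) ^ 2 := by
  simp only [EuclideanSpace.real_norm_sq_eq, PiLp.sub_apply, hν, hμ', Finset.mul_sum,
    ← Finset.sum_add_distrib, ← Finset.sum_sub_distrib]
  exact Finset.sum_le_sum fun j _ => max_zero_corrector_le (hw j) hε₀ hε₁ _ _ _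

lemma sq_le_mul_card_mul_sum_sq {ι : Type*} [Fintype ι] {a K : ℝ} {d : ι → ℝ} (ha : 0 ≤ a)
    (h : a ≤ K * ∑ i, d i) : a ^ 2 ≤ K ^ 2 * Fintype.card ι * ∑ i, d i ^ 2 := by
  calc a ^ 2 ≤ K ^ 2 * (∑ i, d i) ^ 2 := by rw [← mul_pow]; exact pow_le_pow_left₀ ha h 2
    _ ≤ K ^ 2 * (Fintype.card ι * ∑ i, d i ^ 2) :=
      mul_le_mul_of_nonneg_left (sq_sum_le_card_mul_sum_sq ..) (sq_nonneg K)
    _ = K ^ 2 * Fintype.card ι * ∑ i, d i ^ 2 := by ring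

lemma norm_sub_sq_le_of_predictor_corrector {ι : Type*} [Fintype ι] {E : ι → Type*}
    [∀ i, SeminormedAddCommGroup (E i)] [∀ i, NormedSpace ℝ (E i)] {F : Type*}
    [SeminormedAddCommGroup F] [NormedSpace ℝ F] {A : ∀ i, E i →L[ℝ] F} {K ρ : ℝ}
    (hA : ∀ i, ‖A i‖ ≤ K) (hρ : 0 ≤ ρ) {b lam γ lam' : F} {x x' : ∀ i, E i}
    (hγ : γ = lam + ρ • (∑ i, A i (x i) - b)) (hlam' : lam' = lam + ρ • (∑ i, A i (x' i) - b)) :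
    ‖γ - lam'‖ ^ 2 ≤ (ρ * K) ^ 2 * Fintype.card ι * ∑ i, ‖x' i - x i‖ ^ 2 := by
  have hdiff : γ - lam' = ρ • ∑ i, A i (x i - x' i) := by
    simp only [hγ, hlam', map_sub, Finset.sum_sub_distrib]
    module
  refine sq_le_mul_card_mul_sum_sq (norm_nonneg _) ?_
  rw [hdiff, norm_smul, Real.norm_of_nonneg hρ, mul_assoc, Finset.mul_sum]
  refine mul_le_mul_of_nonneg_left ((norm_sum_le _ _).trans (Finset.sum_le_sum fun i _ => ?_)) hρ
  rw [norm_sub_rev (x' i)]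
  exact (A i).le_of_opNorm_le (hA i) _

lemma sum_sq_sub_le_of_abs_sub_le {κ ι : Type*} [Fintype κ] [Fintype ι] {E : ι → Type*}
    [∀ i, SeminormedAddCommGroup (E i)] {G : κ → ∀ i, E i → ℝ} {K : ℝ} {x x' : ∀ i, E i}
    (hG : ∀ j i, |G j i (x' i) - G j i (x i)| ≤ K * ‖x' i - x i‖) (ρ : ℝ) :
    ∑ j, (ρ * ∑ i, G j i (x i) - ρ * ∑ i, G j i (x' i)) ^ 2
      ≤ Fintype.card κ * ((ρ * K) ^ 2 * Fintype.card ι * ∑ i, ‖x' i - x i‖ ^ 2) := by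
  have hj : ∀ j, (ρ * ∑ i, G j i (x i) - ρ * ∑ i, G j i (x' i)) ^ 2
      ≤ (ρ * K) ^ 2 * Fintype.card ι * ∑ i, ‖x' i - x i‖ ^ 2 := fun j => by
    have hsq := sq_le_mul_card_mul_sum_sq (abs_nonneg _) ((Finset.abs_sum_le_sum_abs _ _).trans
      ((Finset.sum_le_sum fun i _ => hG j i).trans_eq (Finset.mul_sum ..).symm))
    rw [sq_abs, Finset.sum_sub_distrib] at hsq
    calc (ρ * ∑ i, G j i (x i) - ρ * ∑ i, G j i (x' i)) ^ 2
        = ρ ^ 2 * (∑ i, G j i (x' i) - ∑ i, G j i (x i)) ^ 2 := by ring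
      _ ≤ ρ ^ 2 * (K ^ 2 * Fintype.card ι * ∑ i, ‖x' i - x i‖ ^ 2) := by gcongr
      _ = (ρ * K) ^ 2 * Fintype.card ι * ∑ i, ‖x' i - x i‖ ^ 2 := by ring
  simpa using Finset.sum_le_sum fun j (_ : j ∈ Finset.univ) => hj j

lemma pos_and_mul_le_of_le_div {ρ r d : ℝ} (hρ : 0 < ρ) (hr : 0 ≤ r) (h : ρ ≤ r / d) :
    0 < d ∧ ρ * d ≤ r := by
  have hd : 0 < d := by
    -- `r / d ≤ 0` for every `d ≤ 0`, including the junk value `r / 0 = 0`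
    by_contra! hd
    exact absurd (h.trans (div_nonpos_of_nonneg_of_nonpos hr hd)) hρ.not_ge
  exact ⟨hd, (le_div_iff₀ hd).1 h⟩

lemma one_add_mul_le_of_step_le {ρ ε a l n m : ℝ} (hρ : 0 ≤ ρ) (hε₀ : 0 ≤ ε) (ha : 0 ≤ a)
    (hl : 0 ≤ l) (hm : 0 ≤ m) (h₁ : ρ * (a + m * l) ≤ 1 - ε) (h₂ : ρ * (n * a) ≤ 1 - ε)
    (h₃ : ρ * (n * l) ≤ 1 - ε) :
    (1 + ε) * ((ρ * a) ^ 2 * n + m * ((ρ * l) ^ 2 * n)) ≤ 1 - ε := by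
  have hε : 0 ≤ 1 - ε := le_trans (by positivity) h₁
  have hsq : (ρ * a) ^ 2 * n + m * ((ρ * l) ^ 2 * n) ≤ (1 - ε) ^ 2 := by
    calc (ρ * a) ^ 2 * n + m * ((ρ * l) ^ 2 * n)
        = ρ * (n * a) * (ρ * a) + ρ * (n * l) * (ρ * m * l) := by ring
      _ ≤ (1 - ε) * (ρ * a) + (1 - ε) * (ρ * m * l) := by gcongr
      _ = (1 - ε) * (ρ * (a + m * l)) := by ring
      _ ≤ (1 - ε) * (1 - ε) := by gcongr
      _ = (1 - ε) ^ 2 := by ring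
  nlinarith [mul_le_mul_of_nonneg_left hsq (by linarith : 0 ≤ 1 + ε), sq_nonneg ε]

section Lagrangian
variable {N M m : ℕ} {n : Fin N → ℕ}
  {f : ∀ i, EuclideanSpace ℝ (Fin (n i)) → ℝ}
  {A : ∀ i, EuclideanSpace ℝ (Fin (n i)) →L[ℝ] EuclideanSpace ℝ (Fin m)}
  {b : EuclideanSpace ℝ (Fin m)} {g : Fin M → ∀ i, EuclideanSpace ℝ (Fin (n i)) → ℝ}
  {X : ∀ i, Set (EuclideanSpace ℝ (Fin (n i)))} {xs : ∀ i, EuclideanSpace ℝ (Fin (n i))}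
  {ls : EuclideanSpace ℝ (Fin m)} {ms : EuclideanSpace ℝ (Fin M)}

lemma lagrangian_eq_sum_sub (x : ∀ i, EuclideanSpace ℝ (Fin (n i)))
    (lam : EuclideanSpace ℝ (Fin m)) (mu : EuclideanSpace ℝ (Fin M)) :
    lagrangian f A b g x lam mu
      = ∑ i, (f i (x i) + ⟪lam, A i (x i)⟫ + ∑ j, mu j * g j i (x i)) - ⟪lam, b⟫ := by
  simp only [lagrangian, Finset.sum_add_distrib, inner_sub_right, inner_sum, Finset.mul_sum]
  rw [Finset.sum_comm (γ := Fin M)]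
  ring

lemma lagrangian_sub_lagrangian (x : ∀ i, EuclideanSpace ℝ (Fin (n i)))
    (lam lam' : EuclideanSpace ℝ (Fin m)) (mu mu' : EuclideanSpace ℝ (Fin M)) :
    lagrangian f A b g x lam mu - lagrangian f A b g x lam' mu'
      = ⟪lam - lam', ∑ i, A i (x i) - b⟫ + ∑ j, (mu j - mu' j) * ∑ i, g j i (x i) := by
  simp only [lagrangian, inner_sub_left, sub_mul, Finset.sum_sub_distrib]
  ring

lemma IsSaddlePoint.lagrangian_le (h : IsSaddlePoint f A b g X xs ls ms)
    {x : ∀ i, EuclideanSpace ℝ (Fin (n i))} (hx : ∀ i, x i ∈ X i)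
    (lam : EuclideanSpace ℝ (Fin m)) {mu : EuclideanSpace ℝ (Fin M)} (hmu : ∀ j, 0 ≤ mu j) :
    lagrangian f A b g xs lam mu ≤ lagrangian f A b g x ls ms :=
  (h.2.2.1 lam mu hmu).trans (h.2.2.2 x hx)

lemma IsSaddlePoint.proximal_step_le (h : IsSaddlePoint f A b g X xs ls ms)
    (hX : ∀ i, Convex ℝ (X i)) (hf : ∀ i, ConvexOn ℝ Set.univ (f i))
    (hg : ∀ j i, ConvexOn ℝ Set.univ (g j i))
    {ρ : ℝ} (hρ : 0 < ρ) {γ : EuclideanSpace ℝ (Fin m)} {ν : EuclideanSpace ℝ (Fin M)}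
    (hν : ∀ j, 0 ≤ ν j) {x₀ x₁ : ∀ i, EuclideanSpace ℝ (Fin (n i))} (hx₁ : ∀ i, x₁ i ∈ X i)
    (hmin : ∀ i, IsMinOn (fun z => f i z + ⟪γ, A i z⟫ + ∑ j, ν j * g j i z
      + 1 / (2 * ρ) * ‖z - x₀ i‖ ^ 2) (X i) (x₁ i)) :
    2 * ρ * (lagrangian f A b g x₁ γ ν - lagrangian f A b g x₁ ls ms)
        + ∑ i, ‖x₁ i - x₀ i‖ ^ 2 + ∑ i, ‖x₁ i - xs i‖ ^ 2
      ≤ ∑ i, ‖x₀ i - xs i‖ ^ 2 := by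
  have hblock : ∀ i, f i (x₁ i) + ⟪γ, A i (x₁ i)⟫ + ∑ j, ν j * g j i (x₁ i)
      + 1 / (2 * ρ) * ‖x₁ i - x₀ i‖ ^ 2 + 1 / (2 * ρ) * ‖x₁ i - xs i‖ ^ 2
      ≤ f i (xs i) + ⟪γ, A i (xs i)⟫ + ∑ j, ν j * g j i (xs i)
        + 1 / (2 * ρ) * ‖x₀ i - xs i‖ ^ 2 := fun i => by
    have hconv := convexOn_add_inner_add_sum ((hf i).subset (Set.subset_univ _) (hX i))
      (fun j => (hg j i).subset (Set.subset_univ _) (hX i)) hν (A i) γ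
    simpa only [norm_sub_rev (xs i)] using
      hconv.le_of_isMinOn_add_norm_sub_sq (hx₁ i) (hmin i) (h.1 i)
  have hsum := Finset.sum_le_sum fun i (_ : i ∈ Finset.univ) => hblock i
  have hsaddle := h.lagrangian_le hx₁ γ hν
  have hgap : lagrangian f A b g x₁ γ ν - lagrangian f A b g x₁ ls ms
      + 1 / (2 * ρ) * (∑ i, ‖x₁ i - x₀ i‖ ^ 2 + ∑ i, ‖x₁ i - xs i‖ ^ 2)
      ≤ 1 / (2 * ρ) * ∑ i, ‖x₀ i - xs i‖ ^ 2 := by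
    rw [lagrangian_eq_sum_sub, lagrangian_eq_sum_sub] at hsaddle ⊢
    simp only [Finset.sum_add_distrib, ← Finset.mul_sum] at hsum hsaddle ⊢
    linarith
  have hscaled := mul_le_mul_of_nonneg_left hgap (by positivity : 0 ≤ 2 * ρ)
  rw [mul_add, ← mul_assoc, ← mul_assoc, mul_one_div_cancel (by positivity), one_mul,
    one_mul] at hscaled
  linarith

end Lagrangian

theorem stmt_5_general {N M m : ℕ} {n : Fin N → ℕ}
    (f : ∀ i, EuclideanSpace ℝ (Fin (n i)) → ℝ)
    (A : ∀ i, EuclideanSpace ℝ (Fin (n i)) →L[ℝ] EuclideanSpace ℝ (Fin m))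
    (b : EuclideanSpace ℝ (Fin m))
    (g : Fin M → ∀ i, EuclideanSpace ℝ (Fin (n i)) → ℝ)
    (X : ∀ i, Set (EuclideanSpace ℝ (Fin (n i))))
    (hX : ∀ i, IsClosed (X i) ∧ Convex ℝ (X i))
    (hf : ∀ i, Continuous (f i) ∧ ConvexOn ℝ Set.univ (f i))
    (hg : ∀ j i, Continuous (g j i) ∧ ConvexOn ℝ Set.univ (g j i))
    (xs : ∀ i, EuclideanSpace ℝ (Fin (n i)))
    (ls : EuclideanSpace ℝ (Fin m)) (ms : EuclideanSpace ℝ (Fin M))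
    (hsaddle : IsSaddlePoint f A b g X xs ls ms)
    (Lc : Fin M → Fin N → ℝ)
    (hLip : ∀ j i, ∀ y ∈ X i, ∀ z ∈ X i, |g j i y - g j i z| ≤ Lc j i * ‖y - z‖)
    (Amax Lmax : ℝ) (hAmax : ∀ i, ‖A i‖ ≤ Amax) (hLmax : ∀ j i, Lc j i ≤ Lmax)
    (ε : ℝ) (hε0 : 0 < ε) (hε1 : ε < 1)
    (ρ : ℝ) (hρ0 : 0 < ρ)
    (hρ1 : ρ ≤ (1 - ε) / (Amax + M * Lmax))
    (hρ2 : ρ ≤ (1 - ε) / (N * Amax))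
    (hρ3 : ρ ≤ (1 - ε) / (N * Lmax))
    (xk : ∀ i, EuclideanSpace ℝ (Fin (n i))) (hxk : ∀ i, xk i ∈ X i)
    (lamk : EuclideanSpace ℝ (Fin m)) (muk : EuclideanSpace ℝ (Fin M))
    (γ : EuclideanSpace ℝ (Fin m)) (ν : EuclideanSpace ℝ (Fin M))
    (hγ : γ = lamk + ρ • ((∑ i, A i (xk i)) - b))
    (hν : ∀ j, ν j = max 0 (muk j + ρ * ∑ i, g j i (xk i)))
    (xk1 : ∀ i, EuclideanSpace ℝ (Fin (n i))) (hxk1 : ∀ i, xk1 i ∈ X i)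
    (hmin : ∀ i, ∀ y ∈ X i,
      f i (xk1 i) + (inner ℝ γ (A i (xk1 i)) : ℝ) + (∑ j, ν j * g j i (xk1 i))
          + 1 / (2 * ρ) * ‖xk1 i - xk i‖ ^ 2
        ≤ f i y + (inner ℝ γ (A i y) : ℝ) + (∑ j, ν j * g j i y)
          + 1 / (2 * ρ) * ‖y - xk i‖ ^ 2)
    (lamk1 : EuclideanSpace ℝ (Fin m)) (muk1 : EuclideanSpace ℝ (Fin M))
    (hlamk1 : lamk1 = lamk + ρ • ((∑ i, A i (xk1 i)) - b))
    (hmuk1 : ∀ j, muk1 j = max 0 (muk j + ρ * ∑ i, g j i (xk1 i))) :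
    ∑ i, ‖xk1 i - xs i‖ ^ 2 + ‖lamk1 - ls‖ ^ 2 + ‖muk1 - ms‖ ^ 2
      ≤ ∑ i, ‖xk i - xs i‖ ^ 2 + ‖lamk - ls‖ ^ 2 + ‖muk - ms‖ ^ 2
        - ε * (∑ i, ‖xk1 i - xk i‖ ^ 2 + ‖γ - lamk1‖ ^ 2 + ‖ν - muk1‖ ^ 2
          + ‖γ - lamk‖ ^ 2 + ‖ν - muk‖ ^ 2) := by
  have hε : 0 ≤ 1 - ε := by linarith
  obtain ⟨-, hc₁⟩ := pos_and_mul_le_of_le_div hρ0 hε hρ1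
  obtain ⟨hNA, hc₂⟩ := pos_and_mul_le_of_le_div hρ0 hε hρ2
  obtain ⟨hNL, hc₃⟩ := pos_and_mul_le_of_le_div hρ0 hε hρ3
  have hν0 : ∀ j, 0 ≤ ν j := fun j => (hν j).symm ▸ le_max_left _ _
  have hprimal := hsaddle.proximal_step_le (fun i => (hX i).2) (fun i => (hf i).2)
    (fun j i => (hg j i).2) hρ0 hν0 hxk1 fun i => isMinOn_iff.2 (hmin i)
  rw [lagrangian_sub_lagrangian] at hprimal
  have hlam := norm_sub_sq_corrector_le hε1.le ls lamk γ lamk1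
  have hmu := norm_sub_sq_projected_corrector_le hε0.le hε1.le hsaddle.2.1 hν hmuk1
  have hγ_sub := norm_sub_sq_le_of_predictor_corrector hAmax hρ0.le hγ hlamk1
  have hν_sub := sum_sq_sub_le_of_abs_sub_le (G := g) (x := xk) (x' := xk1) (fun j i =>
    (hLip j i _ (hxk1 i) _ (hxk i)).trans
      (mul_le_mul_of_nonneg_right (hLmax j i) (norm_nonneg _))) ρ
  simp only [Fintype.card_fin] at hγ_sub hν_sub
  have hstep := one_add_mul_le_of_step_le hρ0.le hε0.le
    (pos_of_mul_pos_right hNA (Nat.cast_nonneg N)).le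
    (pos_of_mul_pos_right hNL (Nat.cast_nonneg N)).le (Nat.cast_nonneg M) hc₁ hc₂ hc₃
  have hinner : ⟪γ - ls, lamk1 - lamk⟫ = ρ * ⟪γ - ls, ∑ i, A i (xk1 i) - b⟫ := by
    rw [hlamk1, add_sub_cancel_left, real_inner_smul_right]
  have hsum_mul : ∑ j, (ν j - ms j) * (ρ * ∑ i, g j i (xk1 i))
      = ρ * ∑ j, (ν j - ms j) * ∑ i, g j i (xk1 i) := by
    rw [Finset.mul_sum]; exact Finset.sum_congr rfl fun j _ => by ring
  have hD : 0 ≤ ∑ i, ‖xk1 i - xk i‖ ^ 2 := by positivity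
  linarith [mul_le_mul_of_nonneg_right hstep hD,
    mul_le_mul_of_nonneg_left (add_le_add hγ_sub hν_sub) (by linarith : (0 : ℝ) ≤ 1 + ε)]

/-- one N-block PCPM iteration is an `ε`-contraction towards any
saddle point, for step sizes satisfying the bound (19). `Amax` bounds all operator
2-norms `‖Aᵢ‖₂` and `Lmax` bounds all Lipschitz moduli `L_{ji}`. -/
theorem stmt_5 {N M m : ℕ} {n : Fin N → ℕ}
    (f : ∀ i, EuclideanSpace ℝ (Fin (n i)) → ℝ)
    (A : ∀ i, EuclideanSpace ℝ (Fin (n i)) →L[ℝ] EuclideanSpace ℝ (Fin m))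
    (b : EuclideanSpace ℝ (Fin m))
    (g : Fin M → ∀ i, EuclideanSpace ℝ (Fin (n i)) → ℝ)
    (X : ∀ i, Set (EuclideanSpace ℝ (Fin (n i))))
    (hX : ∀ i, IsClosed (X i) ∧ Convex ℝ (X i))
    (hf : ∀ i, Continuous (f i) ∧ ConvexOn ℝ Set.univ (f i))
    (hg : ∀ j i, Continuous (g j i) ∧ ConvexOn ℝ Set.univ (g j i))
    (xs : ∀ i, EuclideanSpace ℝ (Fin (n i)))
    (ls : EuclideanSpace ℝ (Fin m)) (ms : EuclideanSpace ℝ (Fin M))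
    (hsaddle : IsSaddlePoint f A b g X xs ls ms)
    (Lc : Fin M → Fin N → ℝ)
    (hLip : ∀ j i, ∀ y ∈ X i, ∀ z ∈ X i, |g j i y - g j i z| ≤ Lc j i * ‖y - z‖)
    (Amax Lmax : ℝ) (hAmax : ∀ i, ‖A i‖ ≤ Amax) (hLmax : ∀ j i, Lc j i ≤ Lmax)
    (ε : ℝ) (hε0 : 0 < ε) (hε1 : ε < 1)
    (ρ : ℝ) (hρ0 : 0 < ρ)
    (hρ1 : ρ ≤ (1 - ε) / (Amax + M * Lmax))
    (hρ2 : ρ ≤ (1 - ε) / (N * Amax))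
    (hρ3 : ρ ≤ (1 - ε) / (N * Lmax))
    (xk : ∀ i, EuclideanSpace ℝ (Fin (n i))) (hxk : ∀ i, xk i ∈ X i)
    (lamk : EuclideanSpace ℝ (Fin m)) (muk : EuclideanSpace ℝ (Fin M))
    (hmuk : ∀ j, 0 ≤ muk j)
    (γ : EuclideanSpace ℝ (Fin m)) (ν : EuclideanSpace ℝ (Fin M))
    (hγ : γ = lamk + ρ • ((∑ i, A i (xk i)) - b))
    (hν : ∀ j, ν j = max 0 (muk j + ρ * ∑ i, g j i (xk i)))
    (xk1 : ∀ i, EuclideanSpace ℝ (Fin (n i))) (hxk1 : ∀ i, xk1 i ∈ X i)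
    (hmin : ∀ i, ∀ y ∈ X i,
      f i (xk1 i) + (inner ℝ γ (A i (xk1 i)) : ℝ) + (∑ j, ν j * g j i (xk1 i))
          + 1 / (2 * ρ) * ‖xk1 i - xk i‖ ^ 2
        ≤ f i y + (inner ℝ γ (A i y) : ℝ) + (∑ j, ν j * g j i y)
          + 1 / (2 * ρ) * ‖y - xk i‖ ^ 2)
    (lamk1 : EuclideanSpace ℝ (Fin m)) (muk1 : EuclideanSpace ℝ (Fin M))
    (hlamk1 : lamk1 = lamk + ρ • ((∑ i, A i (xk1 i)) - b))
    (hmuk1 : ∀ j, muk1 j = max 0 (muk j + ρ * ∑ i, g j i (xk1 i))) :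
    ∑ i, ‖xk1 i - xs i‖ ^ 2 + ‖lamk1 - ls‖ ^ 2 + ‖muk1 - ms‖ ^ 2
      ≤ ∑ i, ‖xk i - xs i‖ ^ 2 + ‖lamk - ls‖ ^ 2 + ‖muk - ms‖ ^ 2
        - ε * (∑ i, ‖xk1 i - xk i‖ ^ 2 + ‖γ - lamk1‖ ^ 2 + ‖ν - muk1‖ ^ 2
          + ‖γ - lamk‖ ^ 2 + ‖ν - muk‖ ^ 2) :=
  stmt_5_general f A b g X hX hf hg xs ls ms hsaddle Lc hLip Amax Lmax hAmax hLmax ε hε0 hε1 ρ hρ0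
    hρ1 hρ2 hρ3 xk hxk lamk muk γ ν hγ hν xk1 hxk1 hmin lamk1 muk1 hlamk1 hmuk1
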